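/- arXiv:1107.5996 — 5 statements merged into one kernel-verified Lean document; each statement's English description precedes it below -/
import Mathlib

section
/- For a prime p, (x1^p * x2 - x1 * x2^p)^(p-1) = sum over i from 0 to p-1 of x1^((p-1)(p-i)) * x2^((p-1)(i+1)) in the polynomial ring F_p[x1, x2]. -/
/-!
Write `u = x₁ᵖ x₂` and `v = x₁ x₂ᵖ`. In characteristic `p` we have
`(u - v)ᵖ = uᵖ - vᵖ = (u - v) · ∑_{i<p} uⁱ vᵖ⁻¹⁻ⁱ`, and cancelling `u - v` in the domain
`𝔽ₚ[x₁, x₂]` leaves `(u - v)ᵖ⁻¹ = ∑_{i<p} uⁱ vᵖ⁻¹⁻ⁱ`. Each summand is a single monomial.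
-/

open Finset

theorem sub_pow_pred_eq_geom_sum₂ {R : Type*} [CommRing R] [IsDomain R] (p : ℕ) [Fact p.Prime]
    [CharP R p] (u v : R) :
    (u - v) ^ (p - 1) = ∑ i ∈ range p, u ^ i * v ^ (p - 1 - i) := by
  have hp := (Fact.out : p.Prime)
  by_cases huv : u = v
  · subst huv
    have hterm : ∀ i ∈ range p, u ^ i * u ^ (p - 1 - i) = u ^ (p - 1) := fun i hi => by
      rw [← pow_add, Nat.add_sub_cancel' (Nat.le_sub_one_of_lt (mem_range.mp hi))]
    rw [sub_self, zero_pow (Nat.sub_ne_zero_of_lt hp.one_lt), sum_congr rfl hterm, sum_const,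
      card_range, nsmul_eq_mul, CharP.cast_eq_zero, zero_mul]
  · refine mul_right_cancel₀ (sub_ne_zero.mpr huv) ?_
    rw [← pow_succ, Nat.sub_add_cancel hp.one_le, sub_pow_char, geom_sum₂_mul]

theorem pow_mul_pow_pow_mul_pow {M : Type*} [CommMonoid M] (a b : M) {p i : ℕ} (hi : i < p) :
    (a ^ p * b) ^ (p - 1 - i) * (a * b ^ p) ^ i =
      a ^ ((p - 1) * (p - i)) * b ^ ((p - 1) * (i + 1)) := by
  obtain ⟨k, rfl⟩ := Nat.exists_eq_add_of_lt hi
  have hk : i + k + 1 - 1 - i = k := by omega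
  have hk' : i + k + 1 - i = k + 1 := by omega
  rw [hk, hk', Nat.add_sub_cancel, mul_pow, mul_pow, ← pow_mul, ← pow_mul, mul_mul_mul_comm,
    ← pow_add, ← pow_add]
  congr 2 <;> ring

open MvPolynomial in
theorem Q0_expansion (p : ℕ) [Fact p.Prime] :
    ((X 0 ^ p * X 1 - X 0 * X 1 ^ p : MvPolynomial (Fin 2) (ZMod p)) ^ (p - 1)) =
      ∑ i ∈ Finset.range p, X 0 ^ ((p - 1) * (p - i)) * X 1 ^ ((p - 1) * (i + 1)) := by
  rw [sub_pow_pred_eq_geom_sum₂, ← sum_range_reflect]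
  refine sum_congr rfl fun i hmem => ?_
  have hi := mem_range.mp hmem
  rw [Nat.sub_sub_self (Nat.le_sub_one_of_lt hi), pow_mul_pow_pow_mul_pow _ _ hi]
end

section
/- For a prime p and g in GL_2(F_p), g acts on the polynomial x1^p*x2 - x1*x2^p (where GL_2(F_p) acts on linear forms via the inverse transpose action, i.e., the dual of the standard action) by multiplication by det(g)^{-1}. -/
open MvPolynomial in
theorem L_semiinvariant (p : ℕ) [Fact p.Prime]
    (g : Matrix.GeneralLinearGroup (Fin 2) (ZMod p)) :
    aeval (fun i : Fin 2 =>
        ∑ j : Fin 2, C ((↑g⁻¹ : Matrix (Fin 2) (Fin 2) (ZMod p)) j i) * X j)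
      (X 0 ^ p * X 1 - X 0 * X 1 ^ p : MvPolynomial (Fin 2) (ZMod p)) =
    C (((↑g : Matrix (Fin 2) (Fin 2) (ZMod p)).det)⁻¹) *
      (X 0 ^ p * X 1 - X 0 * X 1 ^ p) := by
  set h : Matrix (Fin 2) (Fin 2) (ZMod p) := (↑g⁻¹ : Matrix (Fin 2) (Fin 2) (ZMod p)) with hh
  have hdet : ((↑g : Matrix (Fin 2) (Fin 2) (ZMod p)).det)⁻¹ = h.det := by
    rw [hh, Matrix.coe_units_inv, Matrix.det_nonsing_inv, Ring.inverse_eq_inv']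
  have hchar : CharP (MvPolynomial (Fin 2) (ZMod p)) p := by infer_instance
  have key : ∀ i : Fin 2,
      (C (h 0 i) * X 0 + C (h 1 i) * X 1 : MvPolynomial (Fin 2) (ZMod p)) ^ p
        = C (h 0 i) * X 0 ^ p + C (h 1 i) * X 1 ^ p := by
    intro i
    rw [add_pow_char, mul_pow, mul_pow, ← C_pow, ← C_pow, ZMod.pow_card, ZMod.pow_card]
  simp only [map_sub, map_mul, map_pow, aeval_X, Fin.sum_univ_two, key]
  rw [hdet, Matrix.det_fin_two, map_sub, map_mul, map_mul]
  ring
end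

section
/- For a prime p, the polynomials Q0 = (x1^p*x2 - x1*x2^p)^(p-1) and Q1 = (x1^(p^2)*x2 - x1*x2^(p^2))/(x1^p*x2 - x1*x2^p) in F_p[x1,x2] are invariant under the action of every element of GL_2(F_p) (acting by inverse transpose on linear forms). -/
/-!
Substituting linear forms with coefficients in `𝔽_p` commutes with `p^k`-th powers, so the
Moore determinant `X₀^(p^k) X₁ - X₀ X₁^(p^k)` is multiplied by `det g⁻¹` under `g`.
For `k = 1` this factor dies in the `(p-1)`-st power, giving `Q₀`. A geometric sum shows
that `Q₁` is the quotient of the Moore determinants for `k = 2` and `k = 1`, which pick up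
the same factor.
-/

open MvPolynomial

theorem pow_mul_sub_mul_pow_mul_geom_sum {R : Type*} [CommRing R] (x y : R) {p : ℕ}
    (hp : 1 ≤ p) :
    (x ^ p * y - x * y ^ p) *
        ∑ i ∈ Finset.range (p + 1), x ^ ((p - 1) * i) * y ^ ((p - 1) * (p - i)) =
      x ^ (p ^ 2) * y - x * y ^ (p ^ 2) := by
  obtain ⟨q, rfl⟩ := Nat.exists_eq_add_of_le' hp
  have hgeom := geom_sum₂_mul (x ^ q) (y ^ q) (q + 2)
  simp only [Nat.add_sub_cancel, Nat.add_succ_sub_one, ← pow_mul] at hgeom ⊢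
  linear_combination (x * y) * hgeom

theorem X_pow_mul_X_sub_X_mul_X_pow_ne_zero {R : Type*} [CommRing R] [Nontrivial R] {n : ℕ}
    (hn : n ≠ 1) : (X 0 ^ n * X 1 - X 0 * X 1 ^ n : MvPolynomial (Fin 2) R) ≠ 0 := by
  intro h
  -- under `X₀ ↦ T, X₁ ↦ 1` it becomes `T^n - T`, whose coefficient of `T` is `-1`
  have := congrArg (fun f => Polynomial.coeff (aeval ![Polynomial.X, (1 : Polynomial R)] f) 1) h
  simp [Ne.symm hn] at this

section Frobenius

variable {p : ℕ} [Fact p.Prime]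

theorem sum_C_mul_X_pow_char_pow {σ : Type*} (s : Finset σ) (c : σ → ZMod p) (k : ℕ) :
    (∑ j ∈ s, C (c j) * X j : MvPolynomial σ (ZMod p)) ^ p ^ k =
      ∑ j ∈ s, C (c j) * X j ^ p ^ k := by
  simp only [sum_pow_char_pow, mul_pow, ← map_pow, ZMod.pow_card_pow]

theorem aeval_X_pow_mul_X_sub_X_mul_X_pow_char_pow (a : Matrix (Fin 2) (Fin 2) (ZMod p))
    (k : ℕ) :
    aeval (fun i : Fin 2 => ∑ j : Fin 2, C (a j i) * X j)
      (X 0 ^ p ^ k * X 1 - X 0 * X 1 ^ p ^ k : MvPolynomial (Fin 2) (ZMod p))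
      = C a.det * (X 0 ^ p ^ k * X 1 - X 0 * X 1 ^ p ^ k) := by
  simp only [map_sub, map_mul, map_pow, aeval_X, sum_C_mul_X_pow_char_pow]
  simp only [Fin.sum_univ_two, Matrix.det_fin_two, map_sub, map_mul]
  ring

end Frobenius

open MvPolynomial in
theorem Q0_Q1_invariant (p : ℕ) [Fact p.Prime]
    (g : Matrix.GeneralLinearGroup (Fin 2) (ZMod p)) :
    (aeval (fun i : Fin 2 =>
        ∑ j : Fin 2, C ((↑g⁻¹ : Matrix (Fin 2) (Fin 2) (ZMod p)) j i) * X j)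
      ((X 0 ^ p * X 1 - X 0 * X 1 ^ p : MvPolynomial (Fin 2) (ZMod p)) ^ (p - 1)) =
      (X 0 ^ p * X 1 - X 0 * X 1 ^ p) ^ (p - 1)) ∧
    (aeval (fun i : Fin 2 =>
        ∑ j : Fin 2, C ((↑g⁻¹ : Matrix (Fin 2) (Fin 2) (ZMod p)) j i) * X j)
      (∑ i ∈ Finset.range (p + 1),
        (X 0 : MvPolynomial (Fin 2) (ZMod p)) ^ ((p - 1) * i) * X 1 ^ ((p - 1) * (p - i))) =
      ∑ i ∈ Finset.range (p + 1), X 0 ^ ((p - 1) * i) * X 1 ^ ((p - 1) * (p - i))) := by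
  have hp := (Fact.out : p.Prime)
  have hdet := (g⁻¹).det_ne_zero
  have hD := aeval_X_pow_mul_X_sub_X_mul_X_pow_char_pow (g⁻¹).val 1
  rw [pow_one] at hD
  refine ⟨?_, ?_⟩
  · rw [map_pow, hD, mul_pow, ← map_pow, ZMod.pow_card_sub_one_eq_one hdet, map_one, one_mul]
  · have hE := aeval_X_pow_mul_X_sub_X_mul_X_pow_char_pow (g⁻¹).val 2
    rw [← pow_mul_sub_mul_pow_mul_geom_sum _ _ hp.one_le, map_mul, hD] at hE
    refine mul_left_cancel₀ (mul_ne_zero (C_ne_zero.mpr hdet)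
      (X_pow_mul_X_sub_X_mul_X_pow_ne_zero hp.ne_one)) ?_
    linear_combination hE
end

section
/- For an odd prime p, the central element of k[GL_2(F_p)] given by the sum of all unipotent reflections (elements conjugate to the Jordan block [[1,1],[0,1]]) acts on the symmetric power S^i(k^2) (char k = p) by -1 if 0 ≤ i < p-1 and by 0 if i = p-1. -/
/-!
Every conjugate of `!![1, 1; 0, 1]` is a transvection `X ↦ X + t λ(X) w` with `t ≠ 0`, where
`w` spans a line `ℓ ∈ ℙ¹(𝔽_p)` and `λ` is the linear form vanishing on `ℓ`. On a monomial `f`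
of degree `i ≤ p - 1`, `t ↦ f(X + t λ(X) w)` is a polynomial of degree `≤ p - 1`, and summing
such a polynomial over `𝔽_p` only picks up minus its coefficient of `t ^ (p - 1)`. Hence each
line contributes `-f(X)` (the missing `t = 0` term) and, when `i = p - 1`, also `-f(λ(X) w)`.
As `p + 1 = 1` in `k` the first contributions add up to `-f`; for `i = p - 1` a binomial
computation (`(p - 1).choose j ≡ (-1) ^ j`) shows that `f(λ_ℓ(X) w_ℓ)` summed over all lines
is `-f(X)`, which cancels it.
-/

open Finset

namespace FiniteField

open Polynomial

variable {K R : Type*} [Field K] [Fintype K] [CommRing R]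

theorem sum_units_eq_sum_sub_zero [DecidableEq K] {M : Type*} [AddCommGroup M] (f : K → M) :
    ∑ t : Kˣ, f t = ∑ c, f c - f 0 := by
  have : univ.map ⟨Units.val, Units.val_injective⟩ = univ.erase (0 : K) := by
    ext c
    simp only [mem_map, mem_univ, true_and, mem_erase, ne_eq, and_true]
    exact isUnit_iff_ne_zero
  rw [← sum_erase_eq_sub (mem_univ 0), ← this, sum_map]
  rfl

theorem sum_pow_eq_ite (m : ℕ) :
    ∑ c : K, c ^ m = if m ≠ 0 ∧ Fintype.card K - 1 ∣ m then -1 else 0 := by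
  classical
  rcases eq_or_ne m 0 with rfl | hm
  · simp
  · have := sum_units_eq_sum_sub_zero (fun c : K => c ^ m)
    rw [sum_pow_units, zero_pow hm, sub_zero] at this
    simp [← this, hm]

variable (χ : K →+* R)

theorem sum_eval_eq_neg_coeff {P : R[X]} (hP : P.natDegree ≤ Fintype.card K - 1) :
    ∑ c : K, P.eval (χ c) = -P.coeff (Fintype.card K - 1) := by
  have hq : Fintype.card K - 1 ≠ 0 := by have := Fintype.one_lt_card (α := K); omega
  simp_rw [eval_eq_sum_range' (Nat.lt_succ_of_le hP)]
  rw [sum_comm]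
  simp_rw [← mul_sum, ← map_pow, ← map_sum, sum_pow_eq_ite, sum_range_succ]
  rw [sum_eq_zero fun j hj => ?_]
  · simp [hq]
  · have : ¬ (j ≠ 0 ∧ Fintype.card K - 1 ∣ j) := fun h =>
      (Nat.le_of_dvd (Nat.pos_of_ne_zero h.1) h.2).not_gt (mem_range.mp hj)
    simp [this]

theorem sum_add_mul_pow_mul_add_mul_pow {a b : ℕ} (hab : a + b ≤ Fintype.card K - 1)
    (x y u v : R) :
    ∑ t : K, (x + χ t * u) ^ a * (y + χ t * v) ^ b =
      if a + b = Fintype.card K - 1 then -(u ^ a * v ^ b) else 0 := by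
  set P : R[X] := (C u * X + C x) ^ a * (C v * X + C y) ^ b
  have hdeg : P.natDegree ≤ a + b := by
    simpa using natDegree_mul_le_of_le (natDegree_pow_le_of_le a natDegree_linear_le)
      (natDegree_pow_le_of_le b natDegree_linear_le)
  have hP : ∀ t : K, (x + χ t * u) ^ a * (y + χ t * v) ^ b = P.eval (χ t) := fun t => by
    simp only [P, eval_mul, eval_pow, eval_add, eval_C, eval_X]; ring
  simp_rw [hP, sum_eval_eq_neg_coeff χ (hdeg.trans hab)]
  split_ifs with h
  · rw [← h, ← mul_one a, ← mul_one b, coeff_mul_add_eq_of_natDegree_le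
      (natDegree_pow_le_of_le a natDegree_linear_le) (natDegree_pow_le_of_le b natDegree_linear_le),
      coeff_pow_of_natDegree_le natDegree_linear_le, coeff_pow_of_natDegree_le natDegree_linear_le]
    simp
  · rw [coeff_eq_zero_of_natDegree_lt (by omega), neg_zero]

end FiniteField

theorem ZMod.natCast_choose_sub_one {p : ℕ} [Fact p.Prime] {j : ℕ} (hj : j < p) :
    (((p - 1).choose j : ℕ) : ZMod p) = (-1) ^ j := by
  induction j with
  | zero => simp
  | succ j ih =>
    have hpascal : (p - 1).choose j + (p - 1).choose (j + 1) = p.choose (j + 1) := by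
      conv_rhs => rw [← Nat.sub_add_cancel (Fact.out : p.Prime).one_le]
      exact (Nat.choose_succ_succ _ _).symm
    have hdvd : ((p.choose (j + 1) : ℕ) : ZMod p) = 0 :=
      (ZMod.natCast_eq_zero_iff _ _).mpr ((Fact.out : p.Prime).dvd_choose_self j.succ_ne_zero hj)
    rw [← hpascal, Nat.cast_add, ih (by omega)] at hdvd
    linear_combination hdvd

section LineSum

variable {p : ℕ} [Fact p.Prime] {R : Type*} [CommRing R] (χ : ZMod p →+* R)

theorem sum_pow_mul_add_pow_sub_one {a b : ℕ} (hab : a + b = p - 1) (x y : R) :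
    ∑ c : ZMod p, χ c ^ a * (χ c * y + x) ^ (p - 1) =
      -(x ^ a * y ^ b * (-1) ^ b) - if b = 0 then y ^ (p - 1) else 0 := by
  have hp := (Fact.out : p.Prime).two_le
  have hexp : ∀ c, χ c ^ a * (χ c * y + x) ^ (p - 1) =
      ∑ m ∈ range p, χ c ^ (a + m) * (y ^ m * x ^ (p - 1 - m) * (p - 1).choose m) := by
    intro c
    rw [add_pow, mul_sum, Nat.sub_add_cancel (by omega)]
    exact sum_congr rfl fun m _ => by ring
  simp_rw [hexp]
  rw [sum_comm]
  simp_rw [← sum_mul, ← map_pow, ← map_sum, FiniteField.sum_pow_eq_ite, ZMod.card]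
  -- `a + m` is a positive multiple of `p - 1` only for `m = b`, and for `m = p - 1` if `a = p - 1`
  have hsmall : ∀ m, a + m < 2 * (p - 1) → a + m ≠ 0 ∧ p - 1 ∣ a + m → m = b :=
    fun m hlt h => by have := Nat.eq_of_dvd_of_lt_two_mul h.1 h.2 hlt; omega
  rcases eq_or_ne b 0 with rfl | hb
  · rw [sum_eq_add_of_mem 0 (p - 1) (mem_range.2 (by omega)) (mem_range.2 (by omega)) (by omega)]
    · rw [if_pos ⟨by omega, ⟨1, by omega⟩⟩, if_pos ⟨by omega, ⟨2, by omega⟩⟩,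
        show a = p - 1 by omega]
      simp only [map_neg, map_one, pow_zero, Nat.sub_zero, Nat.sub_self, Nat.choose_zero_right,
        Nat.choose_self, Nat.cast_one, if_true]
      ring
    · rintro m hm ⟨hm0, hm1⟩
      have := mem_range.1 hm
      rw [if_neg fun h => hm0 (hsmall m (by omega) h), map_zero, zero_mul]
  · rw [sum_eq_single_of_mem b (mem_range.2 (by omega)) fun m hm hmb => ?_]
    · rw [if_pos ⟨by omega, ⟨1, by omega⟩⟩, if_neg hb, show p - 1 - b = a by omega,
        ← map_natCast χ, ZMod.natCast_choose_sub_one (by omega)]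
      simp only [map_neg, map_one, map_pow]
      ring
    · have := mem_range.1 hm
      rw [if_neg fun h => hmb (hsmall m (by omega) h), map_zero, zero_mul]

end LineSum

open Matrix

section UnipotentMatrix

variable {R : Type*} [CommRing R]

def unipotentMatrix (v : Fin 2 → R) (t : R) : Matrix (Fin 2) (Fin 2) R :=
  1 + t • vecMulVec v ![v 1, -v 0]

theorem unipotentMatrix_mul (v : Fin 2 → R) (s t : R) :
    unipotentMatrix v s * unipotentMatrix v t = unipotentMatrix v (s + t) := by
  ext i j
  fin_cases i <;> fin_cases j <;>
    simp [unipotentMatrix, mul_apply, Fin.sum_univ_two, one_apply] <;> ring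

theorem unipotentMatrix_zero (v : Fin 2 → R) : unipotentMatrix v 0 = 1 := by
  simp [unipotentMatrix]

theorem unipotentMatrix_smul (r : R) (v : Fin 2 → R) (t : R) :
    unipotentMatrix (r • v) t = unipotentMatrix v (r ^ 2 * t) := by
  ext i j
  fin_cases i <;> fin_cases j <;> simp [unipotentMatrix] <;> ring

theorem mul_unipotentMatrix (M : Matrix (Fin 2) (Fin 2) R) (v : Fin 2 → R) (t : R) :
    M * unipotentMatrix v (M.det * t) = unipotentMatrix (M *ᵥ v) t * M := by
  ext i j
  fin_cases i <;> fin_cases j <;>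
    simp [unipotentMatrix, mul_apply, Fin.sum_univ_two, one_apply, mulVec,
      dotProduct, det_fin_two] <;> ring

theorem unipotentMatrix_map {S : Type*} [CommRing S] (f : R →+* S) (v : Fin 2 → R) (t : R) :
    (unipotentMatrix v t).map f = unipotentMatrix (f ∘ v) (f t) := by
  ext i j
  fin_cases i <;> fin_cases j <;> simp [unipotentMatrix, one_apply]

theorem transpose_unipotentMatrix_mulVec_zero (v X : Fin 2 → R) (t : R) :
    ((unipotentMatrix v t)ᵀ *ᵥ X) 0 = X 0 + t * (v ⬝ᵥ X * v 1) := by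
  simp [unipotentMatrix, mulVec, dotProduct, Fin.sum_univ_two]; ring

theorem transpose_unipotentMatrix_mulVec_one (v X : Fin 2 → R) (t : R) :
    ((unipotentMatrix v t)ᵀ *ᵥ X) 1 = X 1 + t * (v ⬝ᵥ X * -v 0) := by
  simp [unipotentMatrix, mulVec, dotProduct, Fin.sum_univ_two]; ring

def unipotentGL (v : Fin 2 → R) (t : R) : GL (Fin 2) R :=
  ⟨unipotentMatrix v t, unipotentMatrix v (-t),
    by rw [unipotentMatrix_mul, add_neg_cancel, unipotentMatrix_zero],
    by rw [unipotentMatrix_mul, neg_add_cancel, unipotentMatrix_zero]⟩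

end UnipotentMatrix

section Lines

variable {K : Type*} [Field K]

/-- A spanning vector of each point of `ℙ¹(K) = K ∪ {∞}`, with `none` standing for `∞`. -/
def lineVec : Option K → Fin 2 → K
  | none => ![0, 1]
  | some c => ![1, c]

theorem exists_eq_smul_lineVec {v : Fin 2 → K} (hv : v ≠ 0) :
    ∃ (ℓ : Option K) (r : K), r ≠ 0 ∧ v = r • lineVec ℓ := by
  by_cases h0 : v 0 = 0
  · have h1 : v 1 ≠ 0 := fun h1 => hv (by ext i; fin_cases i <;> simp [h0, h1])
    refine ⟨none, v 1, h1, ?_⟩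
    ext i; fin_cases i <;> simp [lineVec, h0]
  · refine ⟨some (v 1 / v 0), v 0, h0, ?_⟩
    ext i; fin_cases i <;> simp [lineVec, mul_div_cancel₀ _ h0]

theorem exists_mulVec_eq_lineVec_det_eq (ℓ : Option K) (δ : K) :
    ∃ M : Matrix (Fin 2) (Fin 2) K, M *ᵥ ![1, 0] = lineVec ℓ ∧ M.det = δ := by
  cases ℓ with
  | none => exact ⟨!![0, -δ; 1, 0], by ext i; fin_cases i <;> simp [lineVec], by simp⟩
  | some c => exact ⟨!![1, 0; c, δ], by ext i; fin_cases i <;> simp [lineVec], by simp⟩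

theorem unipotentMatrix_lineVec_injective :
    Function.Injective fun j : Option K × Kˣ => unipotentMatrix (lineVec j.1) (j.2 : K) := by
  rintro ⟨ℓ, t⟩ ⟨ℓ', t'⟩ h
  have h00 := congrFun₂ h 0 0
  have h01 := congrFun₂ h 0 1
  have h10 := congrFun₂ h 1 0
  cases ℓ <;> cases ℓ' <;> simp [unipotentMatrix, lineVec] at h00 h01 h10 ⊢
  · exact Units.ext h10
  · rw [← h01] at h00
    exact ⟨mul_left_cancel₀ t.ne_zero h00, Units.ext h01⟩

theorem isConj_iff_exists_mul_eq {n : Type*} [Fintype n] [DecidableEq n] {d s : GL n K} :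
    IsConj d s ↔ ∃ M : GL n K, (M : Matrix n n K) * d = s * M := by
  rw [isConj_iff]
  refine exists_congr fun M => ?_
  rw [mul_inv_eq_iff_eq_mul, Units.ext_iff]
  simp

theorem isConj_iff_exists_unipotentGL {d s : GL (Fin 2) K}
    (hd : (d : Matrix (Fin 2) (Fin 2) K) = !![1, 1; 0, 1]) :
    IsConj d s ↔ ∃ j : Option K × Kˣ, unipotentGL (lineVec j.1) (j.2 : K) = s := by
  have hd' : (d : Matrix (Fin 2) (Fin 2) K) = unipotentMatrix ![1, 0] (-1) := by
    rw [hd]; ext i j; fin_cases i <;> fin_cases j <;> simp [unipotentMatrix]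
  rw [isConj_iff_exists_mul_eq]
  constructor
  · rintro ⟨M, hM⟩
    set A : Matrix (Fin 2) (Fin 2) K := ↑M
    have hdet : A.det ≠ 0 := (GeneralLinearGroup.det M).ne_zero
    have hs : (s : Matrix (Fin 2) (Fin 2) K) = unipotentMatrix (A *ᵥ ![1, 0]) (-A.det⁻¹) := by
      have := mul_unipotentMatrix A ![1, 0] (-A.det⁻¹)
      rw [mul_neg, mul_inv_cancel₀ hdet, ← hd', hM] at this
      exact M.isUnit.mul_right_cancel this
    have hv : A *ᵥ ![1, 0] ≠ 0 := fun h => by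
      have := mulVec_injective_iff_isUnit.2 M.isUnit (h.trans (mulVec_zero _).symm)
      simpa using congrFun this 0
    obtain ⟨ℓ, r, hr, hv⟩ := exists_eq_smul_lineVec hv
    refine ⟨(ℓ, Units.mk0 (r ^ 2 * -A.det⁻¹) (by simp [hr, hdet])), Units.ext ?_⟩
    rw [hs, hv, unipotentMatrix_smul]
    rfl
  · rintro ⟨⟨ℓ, t⟩, rfl⟩
    obtain ⟨M, hMv, hMdet⟩ := exists_mulVec_eq_lineVec_det_eq ℓ (-(t : K)⁻¹)
    have hdet : M.det ≠ 0 := by simp [hMdet]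
    refine ⟨GeneralLinearGroup.mkOfDetNeZero M hdet, ?_⟩
    have := mul_unipotentMatrix M ![1, 0] t
    rw [hMdet, hMv, neg_mul, inv_mul_cancel₀ t.ne_zero, ← hd'] at this
    exact this

end Lines

section ClassSum

variable {R : Type*} [CommRing R]

theorem sum_units_transpose_unipotentMatrix_mulVec {K : Type*} [Field K] [Fintype K]
    [DecidableEq K] (χ : K →+* R) (v : Fin 2 → K) {a b : ℕ}
    (hab : a + b ≤ Fintype.card K - 1) (X : Fin 2 → R) :
    ∑ t : Kˣ, (((unipotentMatrix v t).map χ)ᵀ *ᵥ X) 0 ^ a *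
        (((unipotentMatrix v t).map χ)ᵀ *ᵥ X) 1 ^ b =
      (if a + b = Fintype.card K - 1 then
        -(((χ ∘ v) ⬝ᵥ X * χ (v 1)) ^ a * ((χ ∘ v) ⬝ᵥ X * -χ (v 0)) ^ b) else 0) -
        X 0 ^ a * X 1 ^ b := by
  simp_rw [unipotentMatrix_map, transpose_unipotentMatrix_mulVec_zero,
    transpose_unipotentMatrix_mulVec_one]
  rw [FiniteField.sum_units_eq_sum_sub_zero (fun c => (X 0 + χ c * _) ^ a * (X 1 + χ c * _) ^ b),
    FiniteField.sum_add_mul_pow_mul_add_mul_pow χ hab]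
  simp

variable {p : ℕ} [Fact p.Prime] (χ : ZMod p →+* R)

theorem sum_lineVec_pow_mul_pow {a b : ℕ} (hab : a + b = p - 1) (X : Fin 2 → R) :
    ∑ ℓ : Option (ZMod p), ((χ ∘ lineVec ℓ) ⬝ᵥ X * χ (lineVec ℓ 1)) ^ a *
        ((χ ∘ lineVec ℓ) ⬝ᵥ X * -χ (lineVec ℓ 0)) ^ b = -(X 0 ^ a * X 1 ^ b) := by
  have hline : ∀ c : ZMod p, ((χ ∘ lineVec (some c)) ⬝ᵥ X * χ (lineVec (some c) 1)) ^ a *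
      ((χ ∘ lineVec (some c)) ⬝ᵥ X * -χ (lineVec (some c) 0)) ^ b =
      (-1) ^ b * (χ c ^ a * (χ c * X 1 + X 0) ^ (p - 1)) := fun c => by
    have hform : (χ ∘ lineVec (some c)) ⬝ᵥ X = χ c * X 1 + X 0 := by
      simp only [dotProduct, lineVec, Function.comp_apply, Fin.sum_univ_two, cons_val_zero,
        cons_val_one, cons_val_fin_one, map_one, one_mul]
      ring
    rw [hform]
    simp only [lineVec, Matrix.cons_val_one, Matrix.cons_val_zero, map_one, mul_neg, mul_one]
    rw [mul_pow, neg_pow, ← hab, pow_add]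
    ring
  rw [Fintype.sum_option, sum_congr rfl fun c _ => hline c, ← mul_sum,
    sum_pow_mul_add_pow_sub_one χ hab]
  rcases eq_or_ne b 0 with rfl | hb
  · simp [lineVec, dotProduct, show a = p - 1 by omega]
  · simp only [lineVec, if_neg hb, sub_zero, mul_neg]
    rw [mul_left_comm, ← mul_pow]
    simp [zero_pow hb]

theorem sum_unipotent_pow_mul_pow {a b : ℕ} (hab : a + b ≤ p - 1) (X : Fin 2 → R) :
    ∑ j : Option (ZMod p) × (ZMod p)ˣ,
      (((unipotentMatrix (lineVec j.1) j.2).map χ)ᵀ *ᵥ X) 0 ^ a *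
        (((unipotentMatrix (lineVec j.1) j.2).map χ)ᵀ *ᵥ X) 1 ^ b =
      (if a + b = p - 1 then 0 else -1) * (X 0 ^ a * X 1 ^ b) := by
  have hp : (p : R) = 0 := by simpa using (map_natCast χ p).symm
  rw [Fintype.sum_prod_type]
  simp_rw [sum_units_transpose_unipotentMatrix_mulVec χ _ ((ZMod.card p).symm ▸ hab) X,
    ZMod.card]
  rw [sum_sub_distrib, sum_const, card_univ, Fintype.card_option, ZMod.card]
  split_ifs with h
  · rw [sum_neg_distrib, sum_lineVec_pow_mul_pow χ h X]
    simp [hp]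
  · simp [hp]

end ClassSum

section Homogeneous

open MvPolynomial

theorem sum_aeval_eq_smul_of_isHomogeneous {k ι : Type*} [CommRing k] (s : Finset ι)
    (σ : ι → Fin 2 → MvPolynomial (Fin 2) k) (c : k) {i : ℕ}
    (hσ : ∀ a b, a + b = i → ∑ j ∈ s, σ j 0 ^ a * σ j 1 ^ b = c • (X 0 ^ a * X 1 ^ b))
    {f : MvPolynomial (Fin 2) k} (hf : f.IsHomogeneous i) :
    ∑ j ∈ s, aeval (σ j) f = c • f := by
  conv_lhs => rw [f.as_sum]
  conv_rhs => rw [f.as_sum]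
  simp_rw [map_sum, smul_sum]
  rw [sum_comm]
  refine sum_congr rfl fun d hd => ?_
  have hdeg : d 0 + d 1 = i := by
    have := hf (mem_support_iff.mp hd)
    rw [Finsupp.weight_apply, Finsupp.sum_fintype _ _ (fun n => by simp)] at this
    simpa [Fin.sum_univ_two] using this
  simp_rw [aeval_monomial, Finsupp.prod_fintype _ _ (fun n => pow_zero _), Fin.prod_univ_two,
    ← mul_sum, hσ _ _ hdeg, monomial_eq, Finsupp.prod_fintype _ _ (fun n => pow_zero _),
    Fin.prod_univ_two, algebraMap_eq, mul_smul_comm]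

end Homogeneous

open MvPolynomial Classical in
theorem unipotent_class_sum_action_general (p : ℕ) [Fact p.Prime]
    (k : Type*) [Field k] [CharP k p]
    (i : ℕ) (hi : i ≤ p - 1)
    (d1 : Matrix.GeneralLinearGroup (Fin 2) (ZMod p))
    (hd : (↑d1 : Matrix (Fin 2) (Fin 2) (ZMod p)) = !![1, 1; 0, 1])
    (f : MvPolynomial (Fin 2) k) (hf : f.IsHomogeneous i) :
    ∑ s : Matrix.GeneralLinearGroup (Fin 2) (ZMod p),
        (if IsConj d1 s then
          aeval (fun m : Fin 2 =>
            ∑ n : Fin 2,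
              C (ZMod.castHom dvd_rfl k ((↑s : Matrix (Fin 2) (Fin 2) (ZMod p)) n m)) * X n) f
         else 0) =
      (if i = p - 1 then (0 : k) else -1) • f := by
  let χ : ZMod p →+* MvPolynomial (Fin 2) k := C.comp (ZMod.castHom dvd_rfl k)
  let U (j : Option (ZMod p) × (ZMod p)ˣ) := unipotentGL (lineVec j.1) (j.2 : ZMod p)
  have hclass : univ.filter (IsConj d1) = univ.image U := by
    ext s
    simp only [mem_filter, mem_univ, true_and, mem_image, isConj_iff_exists_unipotentGL hd, U]
  rw [← sum_filter, hclass, sum_image fun j _ j' _ h =>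
    unipotentMatrix_lineVec_injective (congrArg Units.val h)]
  refine sum_aeval_eq_smul_of_isHomogeneous _
    (fun j => ((U j : Matrix (Fin 2) (Fin 2) (ZMod p)).map χ)ᵀ *ᵥ X) _ (fun a b hab => ?_) hf
  refine (sum_unipotent_pow_mul_pow χ (hab ▸ hi) X).trans ?_
  simp [hab]

open MvPolynomial Classical in
theorem unipotent_class_sum_action (p : ℕ) [Fact p.Prime] (hodd : Odd p)
    (k : Type*) [Field k] [IsAlgClosed k] [CharP k p]
    (i : ℕ) (hi : i ≤ p - 1)
    (d1 : Matrix.GeneralLinearGroup (Fin 2) (ZMod p))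
    (hd : (↑d1 : Matrix (Fin 2) (Fin 2) (ZMod p)) = !![1, 1; 0, 1])
    (f : MvPolynomial (Fin 2) k) (hf : f.IsHomogeneous i) :
    ∑ s : Matrix.GeneralLinearGroup (Fin 2) (ZMod p),
        (if IsConj d1 s then
          aeval (fun m : Fin 2 =>
            ∑ n : Fin 2,
              C (ZMod.castHom dvd_rfl k ((↑s : Matrix (Fin 2) (Fin 2) (ZMod p)) n m)) * X n) f
         else 0) =
      (if i = p - 1 then (0 : k) else -1) • f :=
  unipotent_class_sum_action_general p k i hi d1 hd f hf
end

section
/- For a prime p, the polynomial Q1(z) = sum over i from 0 to p of z^{(p-1)i} factored as: the product over all monic irreducible quadratic polynomials x^2 + a x + b over F_p of (x1^2 + a x1 x2 + b x2^2) equals Q1 = (x1^{p^2} x2 - x1 x2^{p^2})/(x1^p x2 - x1 x2^p) in F_p[x1, x2]. -/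
/-!
Over a field `K` with `q` elements the Frobenius gives `∏ a, (u + a v) = u ^ q - u v ^ (q - 1)`.
Applied twice, it shows that the product of `x² + a x y + b y²` over all `(a, b)` is
`G ^ (q + 1) * S`, where `G = x ^ q - x y ^ (q - 1)` and `S` is the geometric sum
`∑ x ^ ((q - 1) i) y ^ ((q - 1) (q - i))`. The reducible forms are the `(x + r y) (x + s y)`;
each comes from the two ordered pairs `(r, s)`, `(s, r)` or from a single diagonal pair, so the
square of their product is `G ^ (2 q) * G ^ 2`, and their product is `G ^ (q + 1)`.
Cancelling it leaves `S`.
-/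

open Polynomial Finset

section sumProd

variable {R : Type*} [CommRing R]

def sumProd (rs : R × R) : R × R := (rs.1 + rs.2, rs.1 * rs.2)

theorem sumProd_eq_sumProd_iff [IsDomain R] {uv : R × R} {r s : R} :
    sumProd uv = sumProd (r, s) ↔ uv = (r, s) ∨ uv = (s, r) := by
  obtain ⟨u, v⟩ := uv
  simp only [sumProd, Prod.mk.injEq]
  constructor
  · rintro ⟨hsum, hprod⟩
    have : (u - r) * (u - s) = 0 := by linear_combination u * hsum - hprod
    rcases mul_eq_zero.mp this with h | h
    · exact .inl ⟨by linear_combination h, by linear_combination hsum - h⟩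
    · exact .inr ⟨by linear_combination h, by linear_combination hsum - h⟩
  · rintro (⟨rfl, rfl⟩ | ⟨rfl, rfl⟩) <;> constructor <;> ring

theorem card_fiber_sumProd_add_card_diag_fiber_sumProd [IsDomain R] [Fintype R] [DecidableEq R]
    (r s : R) :
    #{uv | sumProd uv = sumProd (r, s)} + #{u | sumProd (u, u) = sumProd (r, s)} = 2 := by
  simp only [sumProd_eq_sumProd_iff, Prod.mk.injEq]
  rcases eq_or_ne r s with rfl | h
  · simp [filter_eq']
  · have hdiag : ∀ u : R, ¬(u = r ∧ u = s ∨ u = s ∧ u = r) := by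
      rintro u (⟨rfl, rfl⟩ | ⟨rfl, rfl⟩) <;> exact h rfl
    have hne : (r, s) ≠ (s, r) := fun h' => h (Prod.ext_iff.mp h').1
    rw [filter_or, filter_eq', filter_eq', filter_false_of_mem fun u _ => hdiag u]
    simp [hne]

theorem sq_prod_image_sumProd [IsDomain R] [Fintype R] [DecidableEq R] {M : Type*}
    [CommMonoid M] (F : R × R → M) :
    (∏ c ∈ univ.image sumProd, F c) ^ 2 =
      (∏ rs : R × R, F (sumProd rs)) * ∏ r : R, F (sumProd (r, r)) := by
  rw [Finset.prod_comp (s := univ) F sumProd,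
    ← prod_fiberwise_of_maps_to' (t := univ.image sumProd)
      (fun r _ => mem_image_of_mem _ (mem_univ (r, r))),
    ← prod_mul_distrib, ← prod_pow]
  refine prod_congr rfl fun c hc => ?_
  obtain ⟨⟨r, s⟩, -, rfl⟩ := mem_image.mp hc
  rw [prod_const, ← pow_add, card_fiber_sumProd_add_card_diag_fiber_sumProd]

theorem not_irreducible_iff_exists_sumProd_eq [IsDomain R] (c : R × R) :
    ¬Irreducible (X ^ 2 + C c.1 * X + C c.2) ↔ ∃ rs, sumProd rs = c := by
  have hmonic : (X ^ 2 + C c.1 * X + C c.2).Monic := by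
    rw [add_assoc]
    exact monic_X_pow_add (degree_linear_le.trans_lt (by norm_num))
  rw [hmonic.not_irreducible_iff_exists_add_mul_eq_coeff (by compute_degree!)]
  simp [coeff_X_pow, coeff_X, sumProd, Prod.ext_iff, eq_comm, and_comm]

end sumProd

namespace FiniteField

variable {K : Type*} [Field K] [Fintype K]

local notation "q" => Fintype.card K

theorem prod_X_sub_C_eq_X_pow_card_sub_X : ∏ a : K, (X - C a) = X ^ q - X := by
  have hq := Fintype.one_lt_card (α := K)
  have hmonic : (X ^ q - X : K[X]).Monic := monic_X_pow_sub (by rw [degree_X]; exact_mod_cast hq)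
  have hroots := roots_X_pow_card_sub_X K
  rw [← prod_multiset_X_sub_C_of_monic_of_roots_card_eq hmonic
    (by rw [hroots, X_pow_card_sub_X_natDegree_eq K hq]; rfl), hroots]
  rfl

variable {A : Type*} [CommRing A] [Algebra K A] (x y : A)

theorem prod_sub_algebraMap_mul :
    ∏ a : K, (x - algebraMap K A a * y) = x ^ q - x * y ^ (q - 1) := by
  have h := homogenize_finsetProd (s := univ) (p := fun a : K => X - C a) (n := fun _ => 1)
    fun a _ => natDegree_X_sub_C_le a
  rw [prod_X_sub_C_eq_X_pow_card_sub_X, sum_const, card_univ, smul_eq_mul, mul_one] at h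
  apply_fun MvPolynomial.aeval ![x, y] at h
  simpa [Fintype.card_ne_zero] using h.symm

theorem prod_add_algebraMap_mul :
    ∏ a : K, (x + algebraMap K A a * y) = x ^ q - x * y ^ (q - 1) := by
  rw [← prod_sub_algebraMap_mul]
  exact Fintype.prod_equiv (Equiv.neg K) _ _ fun a => by simp [sub_eq_add_neg]

theorem prod_quadForm_fixed_constCoeff (b : K) :
    ∏ a : K, (x ^ 2 + algebraMap K A a * x * y + algebraMap K A b * y ^ 2) =
      (x ^ (q - 1) - y ^ (q - 1)) * (x ^ (q + 1) - algebraMap K A b * y ^ (q + 1)) := by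
  have hfrob : (x ^ 2 + algebraMap K A b * y ^ 2) ^ q =
      (x ^ 2) ^ q + algebraMap K A b * (y ^ 2) ^ q := by
    have h := map_add (frobeniusAlgHom K A) (x ^ 2) (algebraMap K A b * y ^ 2)
    simpa only [frobeniusAlgHom_apply, mul_pow, ← map_pow, pow_card] using h
  obtain ⟨n, hn⟩ := Nat.exists_eq_add_one_of_ne_zero (Fintype.card_ne_zero (α := K))
  calc ∏ a : K, (x ^ 2 + algebraMap K A a * x * y + algebraMap K A b * y ^ 2)
      = ∏ a : K, ((x ^ 2 + algebraMap K A b * y ^ 2) + algebraMap K A a * (x * y)) := by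
        simp only [mul_assoc, add_right_comm]
    _ = _ := by
      rw [prod_add_algebraMap_mul, hfrob, hn, Nat.add_sub_cancel]
      ring

theorem prod_quadForm_univ :
    ∏ c : K × K, (x ^ 2 + algebraMap K A c.1 * x * y + algebraMap K A c.2 * y ^ 2) =
      (x ^ q - x * y ^ (q - 1)) ^ (q + 1) *
        ∑ i ∈ range (q + 1), x ^ ((q - 1) * i) * y ^ ((q - 1) * (q - i)) := by
  have hgeom := geom_sum₂_mul (x ^ (q - 1)) (y ^ (q - 1)) (q + 1)
  rw [Fintype.prod_prod_type, prod_comm]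
  simp only [prod_quadForm_fixed_constCoeff]
  rw [prod_mul_distrib, prod_const, card_univ, prod_sub_algebraMap_mul]
  obtain ⟨n, hn⟩ := Nat.exists_eq_add_one_of_ne_zero (Fintype.card_ne_zero (α := K))
  simp only [hn, Nat.add_sub_cancel, ← pow_mul] at hgeom ⊢
  rw [show x ^ (n + 1) - x * y ^ n = x * (x ^ n - y ^ n) by ring, mul_pow]
  linear_combination -(x ^ n - y ^ n) ^ (n + 1) * x ^ (n + 2) * hgeom

theorem sq_prod_quadForm_image_sumProd [DecidableEq K] :
    (∏ c ∈ univ.image sumProd,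
        (x ^ 2 + algebraMap K A c.1 * x * y + algebraMap K A c.2 * y ^ 2)) ^ 2 =
      ((x ^ q - x * y ^ (q - 1)) ^ (q + 1)) ^ 2 := by
  have hfactor (rs : K × K) :
      x ^ 2 + algebraMap K A (sumProd rs).1 * x * y + algebraMap K A (sumProd rs).2 * y ^ 2 =
        (x + algebraMap K A rs.1 * y) * (x + algebraMap K A rs.2 * y) := by
    simp only [sumProd, map_add, map_mul]
    ring
  rw [sq_prod_image_sumProd]
  simp only [hfactor, Fintype.prod_prod_type, prod_mul_distrib, prod_const, card_univ, prod_pow,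
    prod_add_algebraMap_mul]
  ring

end FiniteField

theorem eq_of_sq_eq_sq_of_algHom_eq {K A : Type*} [CommRing K] [IsDomain K] [CommRing A]
    [IsDomain A] [Algebra K A] (ε : A →ₐ[K] K) {a b : A} (h : a ^ 2 = b ^ 2)
    (hε : ε a = ε b) (hb : ε b ≠ 0) : a = b := by
  rcases sq_eq_sq_iff_eq_or_eq_neg.mp h with h | h
  · exact h
  · have htwo : (2 : K) = 0 := by
      have := congrArg ε h
      rw [map_neg, hε] at this
      exact (mul_eq_zero.mp (by linear_combination this)).resolve_right hb
    have : (2 : A) = 0 := by rw [← map_ofNat (algebraMap K A) 2, htwo, map_zero]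
    linear_combination h - b * this

open MvPolynomial Polynomial Classical in
theorem prod_homogenized_irreducible_quadratics {K : Type*} [Field K] [Fintype K] :
    ∏ c ∈ Finset.univ.filter
        (fun c : K × K =>
          Irreducible (Polynomial.X ^ 2 + Polynomial.C c.1 * Polynomial.X + Polynomial.C c.2)),
        ((X 0 : MvPolynomial (Fin 2) K) ^ 2 + MvPolynomial.C c.1 * X 0 * X 1 +
          MvPolynomial.C c.2 * X 1 ^ 2) =
      ∑ i ∈ Finset.range (Fintype.card K + 1),
        X 0 ^ ((Fintype.card K - 1) * i) * X 1 ^ ((Fintype.card K - 1) * (Fintype.card K - i)) := by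
  have hq : Fintype.card K - 1 ≠ 0 := Nat.sub_ne_zero_of_lt Fintype.one_lt_card
  have hreducible : univ.filter (fun c : K × K =>
      ¬Irreducible (Polynomial.X ^ 2 + Polynomial.C c.1 * Polynomial.X + Polynomial.C c.2)) =
      univ.image sumProd := by
    ext c
    simp [not_irreducible_iff_exists_sumProd_eq]
  -- At `(x, y) = (1, 0)` every quadratic form and `x ^ q - x y ^ (q - 1)` take the value `1`.
  have hred := eq_of_sq_eq_sq_of_algHom_eq (MvPolynomial.aeval ![(1 : K), 0])
    (FiniteField.sq_prod_quadForm_image_sumProd (K := K) (X 0 : MvPolynomial (Fin 2) K) (X 1))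
    (by simp [hq]) (by simp [hq])
  have hall := FiniteField.prod_quadForm_univ (K := K) (X 0 : MvPolynomial (Fin 2) K) (X 1)
  rw [← prod_filter_mul_prod_filter_not univ (fun c : K × K =>
      Irreducible (Polynomial.X ^ 2 + Polynomial.C c.1 * Polynomial.X + Polynomial.C c.2)),
    hreducible, hred] at hall
  simp only [← MvPolynomial.algebraMap_eq]
  refine mul_right_cancel₀ (pow_ne_zero _ fun h => ?_) (hall.trans (mul_comm _ _))
  simpa [hq] using congrArg (MvPolynomial.aeval ![(1 : K), 0]) h

open MvPolynomial Polynomial Classical in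
theorem Q1_prod_irreducible_quadratics (p : ℕ) [Fact p.Prime] :
    ∏ q ∈ Finset.univ.filter
        (fun q : ZMod p × ZMod p =>
          Irreducible (Polynomial.X ^ 2 + Polynomial.C q.1 * Polynomial.X + Polynomial.C q.2)),
        ((X 0 : MvPolynomial (Fin 2) (ZMod p)) ^ 2 + MvPolynomial.C q.1 * X 0 * X 1 +
          MvPolynomial.C q.2 * X 1 ^ 2) =
      ∑ i ∈ Finset.range (p + 1), X 0 ^ ((p - 1) * i) * X 1 ^ ((p - 1) * (p - i)) := by
  simpa only [ZMod.card] using prod_homogenized_irreducible_quadratics (K := ZMod p)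
end
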